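/- Suppose ζ is a primitive d-th root of unity (d ≥ 1 minimal with ζ^d = 1) and that m is even or char K = 2. Set x = Σ_{i=0}^{m−1} γ_i^{dm}, y = Σ_{i=0}^{m−1} δ_i^{dm}, and w = Σ_{i=0}^{m−1} (−1)^{id} ∏_{k=1}^{i} (q_k q_{k+1} ⋯ q_{k+d−1})^{-1} γ_i^{d} δ_i^{d} in E(Λ_q). Then x, y and w lie in Z_gr(E(Λ_q)), and w^m = ε x y, where ε = (−1)^{md/2} ∏_{l=1}^{m−1} ∏_{k=1}^{ld} (q_k q_{k+1} ⋯ q_{k+d−1})^{-1} (in characteristic 2 all signs are 1). -/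

import Mathlib

open scoped BigOperators

noncomputable section

/-- Generators of the path algebra: trivial paths `e i`, arrows `a i : i → i+1`
and `abar i : i+1 → i`. -/
inductive Gen (m : ℕ) : Type
  | e : ZMod m → Gen m
  | a : ZMod m → Gen m
  | abar : ZMod m → Gen m

/-- The free associative algebra on the generators. -/
abbrev FA (K : Type) [Field K] (m : ℕ) : Type := FreeAlgebra K (Gen m)

def Ee (K : Type) [Field K] (m : ℕ) (i : ZMod m) : FA K m := FreeAlgebra.ι K (Gen.e i)
def Aa (K : Type) [Field K] (m : ℕ) (i : ZMod m) : FA K m := FreeAlgebra.ι K (Gen.a i)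
def Bb (K : Type) [Field K] (m : ℕ) (i : ZMod m) : FA K m := FreeAlgebra.ι K (Gen.abar i)

/-- The defining relations of the path algebra KQ. -/
inductive PathRel (K : Type) [Field K] (m : ℕ) [NeZero m] : FA K m → FA K m → Prop
  | orth : ∀ i j : ZMod m, i ≠ j → PathRel K m (Ee K m i * Ee K m j) 0
  | idem : ∀ i : ZMod m, PathRel K m (Ee K m i * Ee K m i) (Ee K m i)
  | total : PathRel K m (∑ i : ZMod m, Ee K m i) 1
  | asrc : ∀ i : ZMod m, PathRel K m (Ee K m i * Aa K m i) (Aa K m i)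
  | atgt : ∀ i : ZMod m, PathRel K m (Aa K m i * Ee K m (i + 1)) (Aa K m i)
  | bsrc : ∀ i : ZMod m, PathRel K m (Ee K m (i + 1) * Bb K m i) (Bb K m i)
  | btgt : ∀ i : ZMod m, PathRel K m (Bb K m i * Ee K m i) (Bb K m i)

/-- The path algebra KQ. -/
abbrev PathAlg (K : Type) [Field K] (m : ℕ) [NeZero m] : Type := RingQuot (PathRel K m)

def pe (K : Type) [Field K] (m : ℕ) [NeZero m] (i : ZMod m) : PathAlg K m :=
  RingQuot.mkAlgHom K (PathRel K m) (Ee K m i)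
def pa (K : Type) [Field K] (m : ℕ) [NeZero m] (i : ZMod m) : PathAlg K m :=
  RingQuot.mkAlgHom K (PathRel K m) (Aa K m i)
def pb (K : Type) [Field K] (m : ℕ) [NeZero m] (i : ZMod m) : PathAlg K m :=
  RingQuot.mkAlgHom K (PathRel K m) (Bb K m i)

/-- The relations defining the Koszul dual (Ext algebra) of `Λ_q`:
`q_i⁻¹ a_i ā_i + ā_{i-1} a_{i-1} = 0`. -/
inductive ExtRel (K : Type) [Field K] (m : ℕ) [NeZero m] (q : ZMod m → K) :
    PathAlg K m → PathAlg K m → Prop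
  | rel : ∀ i : ZMod m,
      ExtRel K m q ((q i)⁻¹ • (pa K m i * pb K m i) + pb K m (i - 1) * pa K m (i - 1)) 0

/-- The Ext algebra `E(Λ_q)`. -/
abbrev ExtAlg (K : Type) [Field K] (m : ℕ) [NeZero m] (q : ZMod m → K) : Type :=
  RingQuot (ExtRel K m q)

def xe (K : Type) [Field K] (m : ℕ) [NeZero m] (q : ZMod m → K) (i : ZMod m) :
    ExtAlg K m q := RingQuot.mkAlgHom K (ExtRel K m q) (pe K m i)
def xa (K : Type) [Field K] (m : ℕ) [NeZero m] (q : ZMod m → K) (i : ZMod m) :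
    ExtAlg K m q := RingQuot.mkAlgHom K (ExtRel K m q) (pa K m i)
def xb (K : Type) [Field K] (m : ℕ) [NeZero m] (q : ZMod m → K) (i : ZMod m) :
    ExtAlg K m q := RingQuot.mkAlgHom K (ExtRel K m q) (pb K m i)

/-- `γ_i^n`, the image of the path `a_i a_{i+1} ⋯ a_{i+n-1}` in `E(Λ_q)`. -/
def gam (K : Type) [Field K] (m : ℕ) [NeZero m] (q : ZMod m → K) (i : ZMod m) :
    ℕ → ExtAlg K m q
  | 0 => xe K m q i
  | n + 1 => xa K m q i * gam K m q (i + 1) n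

/-- `δ_i^n`, the image of the path `ā_{i+n-1} ⋯ ā_{i+1} ā_i` in `E(Λ_q)`. -/
def del (K : Type) [Field K] (m : ℕ) [NeZero m] (q : ZMod m → K) (i : ZMod m) :
    ℕ → ExtAlg K m q
  | 0 => xe K m q i
  | n + 1 => xb K m q (i + (n : ZMod m)) * del K m q i n

/-- Homogeneity of path-length degree `n` in `E(Λ_q)`: membership in the span of
the (images of) paths of length `n`, i.e. of the monomials `γ_i^s δ_j^t` with `s + t = n`. -/
def Homog (K : Type) [Field K] (m : ℕ) [NeZero m] (q : ZMod m → K) (n : ℕ)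
    (z : ExtAlg K m q) : Prop :=
  z ∈ Submodule.span K
    {x : ExtAlg K m q | ∃ (i j : ZMod m) (s t : ℕ), s + t = n ∧ x = gam K m q i s * del K m q j t}

/-- The graded centre of `E(Λ_q)`: the subalgebra generated by all homogeneous elements `z`
of degree `n` such that `z g = (-1)^{n n'} g z` for all homogeneous `g` of degree `n'`. -/
def ZGr (K : Type) [Field K] (m : ℕ) [NeZero m] (q : ZMod m → K) :
    Subalgebra K (ExtAlg K m q) :=
  Algebra.adjoin K
    {z : ExtAlg K m q | ∃ n : ℕ, Homog K m q n z ∧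
      ∀ (n' : ℕ) (g : ExtAlg K m q), Homog K m q n' g →
        z * g = ((-1 : K) ^ (n * n')) • (g * z)}

/-- The product `q_k q_{k+1} ⋯ q_{k+len-1}` (subscripts modulo `m`). -/
def qblock (K : Type) [Field K] (m : ℕ) [NeZero m] (q : ZMod m → K) (k len : ℕ) : K :=
  ∏ j ∈ Finset.range len, q ((k + j : ℕ) : ZMod m)

/-- The coefficient `∏_{k=1}^{i} (q_k ⋯ q_{k+len-1})⁻¹`. -/
def wcoef (K : Type) [Field K] (m : ℕ) [NeZero m] (q : ZMod m → K) (i len : ℕ) : K :=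
  ∏ k ∈ Finset.Icc 1 i, (qblock K m q k len)⁻¹

/-!
All products of paths in `E(Λ_q)` are governed by one rule: the relation
`ā_i a_i = -q_{i+1}⁻¹ a_{i+1} ā_{i+1}` moves `δ_i^t` past `γ_i^s` at the cost of the scalar
`c(i, s, t) = swapCoeff q i s t`, one factor `-q⁻¹` for each of the `s t` transpositions of an
`ā` with an `a` (`del_mul_gam`); any other product of two paths either concatenates or vanishes
because the endpoints disagree. A block of `m` consecutive factors multiplies to
`∏_z (-q_z⁻¹) = (-1)^m ζ⁻¹`, whose `d`-th power is `1` when `m` is even or `char K = 2`. Hence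
`c(i, s, t) = 1` whenever `s` or `t` is `d m`, so `x` and `y` commute with every path. The
coefficients of `w` are `c(0, d, i)`, and the cocycle identity
`c(0, d, i) c(i, d, t) = c(0, d, i + t)` (indices read modulo `m`) is exactly what makes `w`
commute with every path. The signs `(-1)^{n n'}` attached to the degrees of `x`, `y`, `w` are
trivial, so commuting is graded commuting. Finally `w^m = Σ_i μ_i γ_i^{dm} δ_i^{dm}`, the cocycle
identities show that `μ_i` does not depend on `i`, and `μ_0 = ε`.
-/

open Finset

theorem add_natCast_succ {R : Type*} [AddCommMonoidWithOne R] (i : R) (s : ℕ) :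
    i + ((s + 1 : ℕ) : R) = i + 1 + s := by
  rw [Nat.cast_succ, add_comm (s : R), add_assoc]

theorem neg_one_pow_eq_one_of_even_or_ringChar_two {R : Type*} [Ring R] [Nontrivial R] {n : ℕ}
    (h : Even n ∨ ringChar R = 2) : (-1 : R) ^ n = 1 := by
  rcases h with h | h
  · exact h.neg_one_pow
  · rw [neg_one_eq_one_iff.mpr h, one_pow]

theorem prod_range_neg_one_pow {R : Type*} [CommRing R] [Nontrivial R] {n : ℕ}
    (h : Even n ∨ ringChar R = 2) (d : ℕ) :
    ∏ j ∈ range n, (-1 : R) ^ (j * d * d) = (-1) ^ (n * d / 2) := by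
  rcases h with ⟨k, rfl⟩ | h
  · have hsum : ∑ j ∈ range (k + k), j = k * (k + k - 1) := by
      have := sum_range_id_mul_two (k + k)
      nlinarith
    have hhalf : (k + k) * d / 2 = k * d := by
      rw [show (k + k) * d = 2 * (k * d) by ring, Nat.mul_div_cancel_left _ two_pos]
    simp_rw [mul_assoc]
    rw [prod_pow_eq_pow_sum, ← sum_mul, hsum, hhalf]
    rcases Nat.even_or_odd (k * d) with he | ho
    · rw [he.neg_one_pow, Even.neg_one_pow]
      rcases Nat.even_mul.1 he with hk | hd
      · exact (hk.mul_right _).mul_right _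
      · exact (hd.mul_right _).mul_left _
    · obtain ⟨hk, hd⟩ := Nat.odd_mul.1 ho
      have hk' : Odd (k + k - 1) := ⟨k - 1, by obtain ⟨j, rfl⟩ := hk; omega⟩
      rw [ho.neg_one_pow, ((hk.mul hk').mul (hd.mul hd)).neg_one_pow]
  · rw [neg_one_eq_one_iff.mpr h]
    simp

namespace ZMod

variable {m : ℕ} [NeZero m]

theorem prod_range_natCast_add {M : Type*} [CommMonoid M] (f : ZMod m → M) (c : ZMod m) :
    ∏ l ∈ range m, f (c + l) = ∏ z, f z := by
  rw [← Equiv.prod_comp (Equiv.addLeft c) f]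
  exact prod_nbij' (↑) ZMod.val (by simp) (by simp [ZMod.val_lt])
    (fun l hl => ZMod.val_cast_of_lt (mem_range.1 hl)) (fun z _ => ZMod.natCast_zmod_val z)
    (fun _ _ => rfl)

theorem prod_range_mul_natCast_add {M : Type*} [CommMonoid M] (f : ZMod m → M) (c : ZMod m)
    (j : ℕ) : ∏ l ∈ range (j * m), f (c + l) = (∏ z, f z) ^ j := by
  induction j with
  | zero => simp
  | succ j ih =>
    rw [Nat.succ_mul, prod_range_add, ih, pow_succ, ← prod_range_natCast_add f c]
    congr 1
    refine prod_congr rfl fun l _ => ?_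
    simp

end ZMod

namespace ExtAlg

variable {K : Type} [Field K] {m : ℕ} {q : ZMod m → K} {d : ℕ}

def swapFactor (q : ZMod m → K) (z : ZMod m) : K := -(q z)⁻¹

def swapCoeff (q : ZMod m → K) (i : ZMod m) (s t : ℕ) : K :=
  ∏ l ∈ range t, ∏ k ∈ range s, swapFactor q (i + ((l + k + 1 : ℕ) : ZMod m))

theorem swapCoeff_comm (i : ZMod m) (s t : ℕ) :
    swapCoeff q i s t = swapCoeff q i t s := by
  rw [swapCoeff, swapCoeff, prod_comm]
  simp only [Nat.add_comm]

theorem swapCoeff_add_right (i : ZMod m) (s t t' : ℕ) :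
    swapCoeff q i s (t + t') = swapCoeff q i s t * swapCoeff q (i + t) s t' := by
  rw [swapCoeff, prod_range_add]
  congr 1
  refine prod_congr rfl fun l _ => prod_congr rfl fun k _ => ?_
  push_cast
  ring_nf

theorem swapCoeff_add_left (i : ZMod m) (s s' t : ℕ) :
    swapCoeff q i (s + s') t = swapCoeff q i s t * swapCoeff q (i + s) s' t := by
  simp only [swapCoeff_comm _ _ t, swapCoeff_add_right]

theorem prod_range_swapCoeff (i : ZMod m) (s t n : ℕ) :
    ∏ j ∈ range n, swapCoeff q (i + (j * s : ℕ)) s t = swapCoeff q i (n * s) t := by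
  induction n with
  | zero => simp [swapCoeff]
  | succ n ih => rw [prod_range_succ, ih, Nat.succ_mul, swapCoeff_add_left]

variable [NeZero m]

theorem swapCoeff_mul_right (i : ZMod m) (s j : ℕ) :
    swapCoeff q i s (j * m) = (∏ z, swapFactor q z) ^ (j * s) := by
  rw [swapCoeff, prod_comm, pow_mul]
  trans ∏ _k ∈ range s, (∏ z, swapFactor q z) ^ j
  · refine prod_congr rfl fun k _ => ?_
    rw [← ZMod.prod_range_mul_natCast_add _ (i + ((k + 1 : ℕ) : ZMod m))]
    refine prod_congr rfl fun l _ => ?_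
    push_cast
    ring_nf
  · rw [prod_const, card_range]

theorem prod_swapFactor_pow_eq_one (hcase : Even m ∨ ringChar K = 2)
    (hq : (∏ z, q z) ^ d = 1) : (∏ z, swapFactor q z) ^ d = 1 := by
  simp only [swapFactor, prod_neg, prod_inv_distrib, card_univ, ZMod.card]
  rw [mul_pow, ← pow_mul, mul_comm, pow_mul, neg_one_pow_eq_one_of_even_or_ringChar_two hcase,
    one_pow, mul_one, inv_pow, hq, inv_one]

theorem swapCoeff_mod_right {s : ℕ} (hP : (∏ z, swapFactor q z) ^ s = 1) (i : ZMod m) (t : ℕ) :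
    swapCoeff q i s (t % m) = swapCoeff q i s t := by
  conv_rhs => rw [← Nat.mod_add_div' t m, swapCoeff_add_right, swapCoeff_mul_right, pow_mul', hP,
    one_pow, mul_one]

-- `wCoeff q d i` is the paper's coefficient `(-1)^{id} ∏_{k=1}^{i} (q_k ⋯ q_{k+d-1})⁻¹` of `w`
-- (`neg_one_pow_mul_wcoef`).
def wCoeff (q : ZMod m → K) (d : ℕ) (i : ZMod m) : K := swapCoeff q 0 d i.val

theorem wCoeff_mul_swapCoeff (hP : (∏ z, swapFactor q z) ^ d = 1) (i : ZMod m) (t : ℕ) :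
    wCoeff q d i * swapCoeff q i d t = wCoeff q d (i + t) := by
  rw [wCoeff, wCoeff, ZMod.val_add, ZMod.val_natCast, Nat.add_mod_mod, swapCoeff_mod_right hP,
    swapCoeff_add_right, zero_add, ZMod.natCast_zmod_val]

theorem neg_one_pow_mul_wcoef (n d : ℕ) :
    (-1 : K) ^ (n * d) * wcoef K m q n d = swapCoeff q 0 d n := by
  have hcard : ((-1 : K) ^ d) ^ n = ((-1 : K) ^ d) ^ #(range n) := by rw [card_range]
  rw [wcoef, ← Ico_add_one_right_eq_Icc, prod_Ico_eq_prod_range, Nat.add_sub_cancel, swapCoeff,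
    mul_comm n, pow_mul, hcard, pow_card_mul_prod]
  refine prod_congr rfl fun l _ => ?_
  simp only [swapFactor, prod_neg, prod_inv_distrib, card_range, qblock]
  congr 2
  refine prod_congr rfl fun k _ => ?_
  push_cast
  ring_nf

theorem prod_wCoeff_add (hP : (∏ z, swapFactor q z) ^ d = 1) (i : ZMod m) :
    ∏ j ∈ range m, wCoeff q d (i + (j * d : ℕ)) = ∏ j ∈ range m, wCoeff q d (j * d : ℕ) := by
  have hshift (j : ℕ) : wCoeff q d (i + (j * d : ℕ)) =
      wCoeff q d (j * d : ℕ) * swapCoeff q (0 + (j * d : ℕ)) d i.val := by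
    rw [zero_add, wCoeff_mul_swapCoeff hP, ZMod.natCast_zmod_val, add_comm]
  rw [prod_congr rfl fun j _ => hshift j, prod_mul_distrib, prod_range_swapCoeff, swapCoeff_comm,
    mul_comm m, swapCoeff_mul_right, pow_mul, hP, one_pow, mul_one]

theorem prod_wCoeff_natCast_mul (hcase : Even m ∨ ringChar K = 2)
    (hP : (∏ z, swapFactor q z) ^ d = 1) :
    ∏ j ∈ range m, wCoeff q d (j * d : ℕ) =
      (-1 : K) ^ (m * d / 2) * ∏ l ∈ Icc 1 (m - 1), ∏ k ∈ Icc 1 (l * d), (qblock K m q k d)⁻¹ := by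
  have hcoeff (j : ℕ) :
      wCoeff q d (j * d : ℕ) = (-1 : K) ^ (j * d * d) * wcoef K m q (j * d) d := by
    rw [wCoeff, ZMod.val_natCast, swapCoeff_mod_right hP, neg_one_pow_mul_wcoef]
  rw [prod_congr rfl fun j _ => hcoeff j, prod_mul_distrib, prod_range_neg_one_pow hcase,
    range_eq_Ico, prod_eq_prod_Ico_succ_bot (NeZero.pos m), ← Ico_add_one_right_eq_Icc,
    Nat.sub_add_cancel NeZero.one_le]
  simp [wcoef]

local notation "γ" => gam K m q
local notation "δ" => del K m q

theorem mk_mk_eq_of_pathRel {x y : FA K m} (h : PathRel K m x y) :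
    RingQuot.mkAlgHom K (ExtRel K m q) (RingQuot.mkAlgHom K (PathRel K m) x) =
      RingQuot.mkAlgHom K (ExtRel K m q) (RingQuot.mkAlgHom K (PathRel K m) y) := by
  rw [RingQuot.mkAlgHom_rel K h]

theorem xe_mul_xe_of_ne {i j : ZMod m} (h : i ≠ j) : xe K m q i * xe K m q j = 0 := by
  simpa [xe, pe] using mk_mk_eq_of_pathRel (q := q) (PathRel.orth i j h)

theorem xe_mul_self (i : ZMod m) : xe K m q i * xe K m q i = xe K m q i := by
  simpa [xe, pe] using mk_mk_eq_of_pathRel (q := q) (PathRel.idem i)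

theorem sum_xe : ∑ i, xe K m q i = 1 := by
  simpa [xe, pe] using mk_mk_eq_of_pathRel (q := q) (PathRel.total (K := K) (m := m))

theorem xe_mul_xa (i : ZMod m) : xe K m q i * xa K m q i = xa K m q i := by
  simpa [xe, xa, pe, pa] using mk_mk_eq_of_pathRel (q := q) (PathRel.asrc i)

theorem xe_mul_xb (i : ZMod m) : xe K m q (i + 1) * xb K m q i = xb K m q i := by
  simpa [xe, xb, pe, pb] using mk_mk_eq_of_pathRel (q := q) (PathRel.bsrc i)

theorem xb_mul_xe (i : ZMod m) : xb K m q i * xe K m q i = xb K m q i := by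
  simpa [xe, xb, pe, pb] using mk_mk_eq_of_pathRel (q := q) (PathRel.btgt i)

theorem xb_mul_xa (i : ZMod m) :
    xb K m q i * xa K m q i = swapFactor q (i + 1) • (xa K m q (i + 1) * xb K m q (i + 1)) := by
  have h := RingQuot.mkAlgHom_rel K (ExtRel.rel (q := q) (i + 1))
  rw [add_sub_cancel_right, map_add, map_smul, map_mul, map_mul, map_zero] at h
  exact (neg_eq_of_add_eq_zero_right h).symm.trans (neg_smul _ _).symm

theorem mul_eq_zero_of_xe {x y : ExtAlg K m q} {i j : ZMod m} (hx : x * xe K m q i = x)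
    (hy : xe K m q j * y = y) (hij : i ≠ j) : x * y = 0 := by
  rw [← hx, ← hy, mul_assoc, ← mul_assoc (xe K m q i), xe_mul_xe_of_ne hij, zero_mul, mul_zero]

theorem gam_zero (i : ZMod m) : γ i 0 = xe K m q i := rfl

theorem del_zero (i : ZMod m) : δ i 0 = xe K m q i := rfl

theorem gam_succ (i : ZMod m) (s : ℕ) : γ i (s + 1) = xa K m q i * γ (i + 1) s := rfl

theorem del_succ (i : ZMod m) (t : ℕ) : δ i (t + 1) = xb K m q (i + t) * δ i t := rfl

theorem xe_mul_gam (i : ZMod m) (s : ℕ) : xe K m q i * γ i s = γ i s := by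
  cases s with
  | zero => exact xe_mul_self i
  | succ s => rw [gam_succ, ← mul_assoc, xe_mul_xa]

theorem gam_mul_xe (i : ZMod m) (s : ℕ) : γ i s * xe K m q (i + s) = γ i s := by
  induction s generalizing i with
  | zero => simpa [gam_zero] using xe_mul_self i
  | succ s ih => rw [add_natCast_succ, gam_succ, mul_assoc, ih]

theorem gam_mul_gam (i : ZMod m) (s s' : ℕ) : γ i s * γ (i + s) s' = γ i (s + s') := by
  induction s generalizing i with
  | zero => simpa [gam_zero] using xe_mul_gam i s'
  | succ s ih => rw [add_natCast_succ, gam_succ, mul_assoc, ih, Nat.succ_add, gam_succ]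

theorem del_mul_xe (i : ZMod m) (t : ℕ) : δ i t * xe K m q i = δ i t := by
  induction t with
  | zero => exact xe_mul_self i
  | succ t ih => rw [del_succ, mul_assoc, ih]

theorem xe_mul_del (i : ZMod m) (t : ℕ) : xe K m q (i + t) * δ i t = δ i t := by
  cases t with
  | zero => simpa [del_zero] using xe_mul_self i
  | succ t => rw [del_succ, ← mul_assoc, Nat.cast_succ, ← add_assoc, xe_mul_xb]

theorem del_mul_del (i : ZMod m) (t t' : ℕ) : δ (i + t) t' * δ i t = δ i (t + t') := by
  induction t' with
  | zero => exact xe_mul_del i t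
  | succ t' ih => rw [del_succ, mul_assoc, ih, ← Nat.add_assoc, del_succ, Nat.cast_add, add_assoc]

theorem gam_mul_gam_of_ne {i j : ZMod m} {s : ℕ} (h : i + s ≠ j) (s' : ℕ) :
    γ i s * γ j s' = 0 :=
  mul_eq_zero_of_xe (gam_mul_xe i s) (xe_mul_gam j s') h

theorem del_mul_del_of_ne {i j : ZMod m} {t : ℕ} (h : j ≠ i + t) (t' : ℕ) :
    δ j t' * δ i t = 0 :=
  mul_eq_zero_of_xe (del_mul_xe j t') (xe_mul_del i t) h

theorem del_mul_gam_of_ne {i j : ZMod m} (h : i ≠ j) (s t : ℕ) : δ i t * γ j s = 0 :=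
  mul_eq_zero_of_xe (del_mul_xe i t) (xe_mul_gam j s) h

theorem gam_mul_del_of_ne {i j : ZMod m} {s t : ℕ} (h : i + s ≠ j + t) : γ i s * δ j t = 0 :=
  mul_eq_zero_of_xe (gam_mul_xe i s) (xe_mul_del j t) h

theorem xb_mul_gam (i : ZMod m) (s : ℕ) :
    xb K m q i * γ i s = swapCoeff q i s 1 • (γ (i + 1) s * xb K m q (i + s)) := by
  induction s generalizing i with
  | zero => simp [swapCoeff, gam_zero, xb_mul_xe, xe_mul_xb]
  | succ s ih =>
    have hc : swapCoeff q i (s + 1) 1 = swapFactor q (i + 1) * swapCoeff q (i + 1) s 1 := by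
      rw [add_comm s, swapCoeff_add_left]
      simp [swapCoeff]
    rw [gam_succ, ← mul_assoc, xb_mul_xa, smul_mul_assoc, mul_assoc, ih, mul_smul_comm, smul_smul,
      ← hc, ← mul_assoc, ← gam_succ, add_natCast_succ]

theorem del_mul_gam (i : ZMod m) (s t : ℕ) :
    δ i t * γ i s = swapCoeff q i s t • (γ (i + t) s * δ (i + s) t) := by
  induction t with
  | zero => simp [swapCoeff, del_zero, gam_mul_xe, xe_mul_gam]
  | succ t ih =>
    rw [del_succ, mul_assoc, ih, mul_smul_comm, ← mul_assoc, xb_mul_gam, smul_mul_assoc, smul_smul,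
      ← swapCoeff_add_right, mul_assoc, add_right_comm i (t : ZMod m) (s : ZMod m), ← del_succ,
      Nat.cast_succ, ← add_assoc]

theorem mem_ZGr_of_commute {z : ExtAlg K m q} {n : ℕ} (hz : Homog K m q n z)
    (hn : (-1 : K) ^ n = 1) (hγ : ∀ i s, Commute z (γ i s)) (hδ : ∀ i t, Commute z (δ i t)) :
    z ∈ ZGr K m q := by
  refine Algebra.subset_adjoin ⟨n, hz, fun n' g hg => ?_⟩
  rw [pow_mul, hn, one_pow, one_smul]
  induction hg using Submodule.span_induction with
  | mem x hx =>
    obtain ⟨i, j, s, t, -, rfl⟩ := hx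
    exact ((hγ i s).mul_right (hδ j t)).eq
  | zero => rw [mul_zero, zero_mul]
  | add x y _ _ hx hy => rw [mul_add, add_mul, hx, hy]
  | smul a x _ hx => rw [mul_smul_comm, smul_mul_assoc, hx]

theorem homog_gam_mul_del (i j : ZMod m) {s t n : ℕ} (h : s + t = n) :
    Homog K m q n (γ i s * δ j t) :=
  Submodule.subset_span ⟨i, j, s, t, h, rfl⟩

theorem homog_sum_gam (n : ℕ) : Homog K m q n (∑ i, γ i n) :=
  Submodule.sum_mem _ fun i _ => by
    have h := homog_gam_mul_del (q := q) i (i + n) (add_zero n)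
    rwa [del_zero, gam_mul_xe] at h

theorem homog_sum_del (n : ℕ) : Homog K m q n (∑ i, δ i n) :=
  Submodule.sum_mem _ fun i _ => by
    have h := homog_gam_mul_del (q := q) (i + n) i (zero_add n)
    rwa [gam_zero, xe_mul_del] at h

theorem sum_gam_mul_gam (n : ℕ) (u : ZMod m) (s : ℕ) :
    (∑ i, γ i n) * γ u s = γ (u - (n : ZMod m)) (n + s) := by
  rw [sum_mul, Fintype.sum_eq_single (u - (n : ZMod m)) fun i hi =>
    gam_mul_gam_of_ne (by rintro rfl; simp at hi) s]
  simpa using gam_mul_gam (u - (n : ZMod m)) n s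

theorem gam_mul_sum_gam (n : ℕ) (u : ZMod m) (s : ℕ) :
    γ u s * ∑ i, γ i n = γ u (s + n) := by
  rw [mul_sum, Fintype.sum_eq_single (u + s) fun i hi => gam_mul_gam_of_ne (Ne.symm hi) n,
    gam_mul_gam]

theorem sum_gam_mul_del (n : ℕ) (v : ZMod m) (t : ℕ) :
    (∑ i, γ i n) * δ v t = γ (v + t - (n : ZMod m)) n * δ v t := by
  rw [sum_mul, Fintype.sum_eq_single (v + t - (n : ZMod m)) fun i hi =>
    gam_mul_del_of_ne (by rintro h; simp [← h] at hi)]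

theorem del_mul_sum_gam (n : ℕ) (v : ZMod m) (t : ℕ) :
    δ v t * ∑ i, γ i n = swapCoeff q v n t • (γ (v + t) n * δ (v + n) t) := by
  rw [mul_sum, Fintype.sum_eq_single v fun i hi => del_mul_gam_of_ne (Ne.symm hi) n t,
    del_mul_gam]

theorem sum_del_mul_gam (n : ℕ) (u : ZMod m) (s : ℕ) :
    (∑ i, δ i n) * γ u s = swapCoeff q u s n • (γ (u + n) s * δ (u + s) n) := by
  rw [sum_mul, Fintype.sum_eq_single u fun i hi => del_mul_gam_of_ne hi s n, del_mul_gam]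

theorem gam_mul_sum_del (n : ℕ) (u : ZMod m) (s : ℕ) :
    γ u s * ∑ i, δ i n = γ u s * δ (u + s - (n : ZMod m)) n := by
  rw [mul_sum, Fintype.sum_eq_single (u + s - (n : ZMod m)) fun i hi =>
    gam_mul_del_of_ne (by rintro h; simp [h] at hi)]

theorem sum_del_mul_del (n : ℕ) (v : ZMod m) (t : ℕ) :
    (∑ i, δ i n) * δ v t = δ v (t + n) := by
  rw [sum_mul, Fintype.sum_eq_single (v + t) fun i hi => del_mul_del_of_ne hi n, del_mul_del]

theorem del_mul_sum_del (n : ℕ) (v : ZMod m) (t : ℕ) :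
    δ v t * ∑ i, δ i n = δ (v - (n : ZMod m)) (n + t) := by
  rw [mul_sum, Fintype.sum_eq_single (v - (n : ZMod m)) fun i hi =>
    del_mul_del_of_ne (by rintro rfl; simp at hi) t]
  simpa using del_mul_del (v - (n : ZMod m)) n t

theorem sum_gam_mul_sum_del (n : ℕ) :
    (∑ i, γ i n) * ∑ i, δ i n = ∑ i, γ i n * δ i n := by
  rw [sum_mul]
  exact sum_congr rfl fun i _ => by rw [gam_mul_sum_del, add_sub_cancel_right]

theorem commute_sum_gam_gam (j : ℕ) (u : ZMod m) (s : ℕ) :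
    Commute (∑ i, γ i (j * m)) (γ u s) := by
  have h : ((j * m : ℕ) : ZMod m) = 0 := by simp
  unfold Commute SemiconjBy
  rw [sum_gam_mul_gam, gam_mul_sum_gam, h, sub_zero, add_comm]

theorem commute_sum_gam_del {j : ℕ} (hP : (∏ z, swapFactor q z) ^ j = 1) (v : ZMod m) (t : ℕ) :
    Commute (∑ i, γ i (j * m)) (δ v t) := by
  have h : ((j * m : ℕ) : ZMod m) = 0 := by simp
  unfold Commute SemiconjBy
  rw [sum_gam_mul_del, del_mul_sum_gam, swapCoeff_comm, swapCoeff_mul_right, pow_mul, hP, one_pow,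
    one_smul, h, sub_zero, add_zero]

theorem commute_sum_del_gam {j : ℕ} (hP : (∏ z, swapFactor q z) ^ j = 1) (u : ZMod m) (s : ℕ) :
    Commute (∑ i, δ i (j * m)) (γ u s) := by
  have h : ((j * m : ℕ) : ZMod m) = 0 := by simp
  unfold Commute SemiconjBy
  rw [sum_del_mul_gam, gam_mul_sum_del, swapCoeff_mul_right, pow_mul, hP, one_pow, one_smul, h,
    sub_zero, add_zero]

theorem commute_sum_del_del (j : ℕ) (v : ZMod m) (t : ℕ) :
    Commute (∑ i, δ i (j * m)) (δ v t) := by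
  have h : ((j * m : ℕ) : ZMod m) = 0 := by simp
  unfold Commute SemiconjBy
  rw [sum_del_mul_del, del_mul_sum_del, h, sub_zero, add_comm]

theorem sum_gam_mem_ZGr {j : ℕ} (hcase : Even m ∨ ringChar K = 2)
    (hP : (∏ z, swapFactor q z) ^ j = 1) : ∑ i, γ i (j * m) ∈ ZGr K m q :=
  mem_ZGr_of_commute (homog_sum_gam _)
    (by rw [pow_mul', neg_one_pow_eq_one_of_even_or_ringChar_two hcase, one_pow])
    (commute_sum_gam_gam j) (commute_sum_gam_del hP)

theorem sum_del_mem_ZGr {j : ℕ} (hcase : Even m ∨ ringChar K = 2)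
    (hP : (∏ z, swapFactor q z) ^ j = 1) : ∑ i, δ i (j * m) ∈ ZGr K m q :=
  mem_ZGr_of_commute (homog_sum_del _)
    (by rw [pow_mul', neg_one_pow_eq_one_of_even_or_ringChar_two hcase, one_pow])
    (commute_sum_del_gam hP) (commute_sum_del_del j)

def w (q : ZMod m → K) (d : ℕ) : ExtAlg K m q :=
  ∑ i, wCoeff q d i • (gam K m q i d * del K m q i d)

theorem w_mul_gam (u : ZMod m) (s : ℕ) :
    w q d * γ u s = (wCoeff q d u * swapCoeff q u s d) • (γ u (d + s) * δ (u + s) d) := by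
  rw [w, sum_mul, Fintype.sum_eq_single u fun i hi => by
    rw [smul_mul_assoc, mul_assoc, del_mul_gam_of_ne hi, mul_zero, smul_zero]]
  rw [smul_mul_assoc, mul_assoc, del_mul_gam, mul_smul_comm, ← mul_assoc, gam_mul_gam, smul_smul]

theorem gam_mul_w (u : ZMod m) (s : ℕ) :
    γ u s * w q d = wCoeff q d (u + s) • (γ u (s + d) * δ (u + s) d) := by
  rw [w, mul_sum, Fintype.sum_eq_single (u + s) fun i hi => by
    rw [mul_smul_comm, ← mul_assoc, gam_mul_gam_of_ne (Ne.symm hi), zero_mul, smul_zero]]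
  rw [mul_smul_comm, ← mul_assoc, gam_mul_gam]

theorem w_mul_del (v : ZMod m) (t : ℕ) :
    w q d * δ v t = wCoeff q d (v + t) • (γ (v + t) d * δ v (t + d)) := by
  rw [w, sum_mul, Fintype.sum_eq_single (v + t) fun i hi => by
    rw [smul_mul_assoc, mul_assoc, del_mul_del_of_ne hi, mul_zero, smul_zero]]
  rw [smul_mul_assoc, mul_assoc, del_mul_del]

theorem del_mul_w (v : ZMod m) (t : ℕ) :
    δ v t * w q d = (wCoeff q d v * swapCoeff q v d t) • (γ (v + t) d * δ v (d + t)) := by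
  rw [w, mul_sum, Fintype.sum_eq_single v fun i hi => by
    rw [mul_smul_comm, ← mul_assoc, del_mul_gam_of_ne (Ne.symm hi), zero_mul, smul_zero]]
  rw [mul_smul_comm, ← mul_assoc, del_mul_gam, smul_mul_assoc, mul_assoc, del_mul_del, smul_smul]

theorem w_mem_ZGr (hP : (∏ z, swapFactor q z) ^ d = 1) : w q d ∈ ZGr K m q := by
  refine mem_ZGr_of_commute (n := d + d) ?_ (Even.neg_one_pow ⟨d, rfl⟩) (fun u s => ?_)
    fun v t => ?_
  · exact Submodule.sum_mem _ fun i _ => Submodule.smul_mem _ _ (homog_gam_mul_del i i rfl)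
  · unfold Commute SemiconjBy
    rw [w_mul_gam, gam_mul_w, swapCoeff_comm, wCoeff_mul_swapCoeff hP, add_comm d]
  · unfold Commute SemiconjBy
    rw [w_mul_del, del_mul_w, wCoeff_mul_swapCoeff hP, add_comm t]

theorem w_pow (hP : (∏ z, swapFactor q z) ^ d = 1) (r : ℕ) :
    w q d ^ r =
      ∑ i, (∏ j ∈ range r, wCoeff q d (i + (j * d : ℕ))) • (γ i (d * r) * δ i (d * r)) := by
  induction r with
  | zero => simp [← sum_xe, gam_zero, del_zero, xe_mul_self]
  | succ r ih =>
    rw [pow_succ, ih, sum_mul]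
    refine sum_congr rfl fun i _ => ?_
    rw [smul_mul_assoc, mul_assoc, del_mul_w, mul_smul_comm, ← mul_assoc, gam_mul_gam, smul_smul,
      wCoeff_mul_swapCoeff hP, prod_range_succ, mul_comm r, add_comm d, Nat.mul_succ]

end ExtAlg

theorem central_elements_m_even_or_char_two_general
    (K : Type) [Field K] (m : ℕ) [NeZero m]
    (q : ZMod m → K)
    (d : ℕ) (hζ : IsPrimitiveRoot (∏ i : ZMod m, q i) d)
    (hcase : Even m ∨ ringChar K = 2) :
    (∑ i : ZMod m, gam K m q i (d * m)) ∈ ZGr K m q ∧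
    (∑ i : ZMod m, del K m q i (d * m)) ∈ ZGr K m q ∧
    (∑ i : ZMod m, ((-1 : K) ^ (i.val * d) * wcoef K m q i.val d) •
        (gam K m q i d * del K m q i d)) ∈ ZGr K m q ∧
    (∑ i : ZMod m, ((-1 : K) ^ (i.val * d) * wcoef K m q i.val d) •
        (gam K m q i d * del K m q i d)) ^ m =
      ((-1 : K) ^ (m * d / 2) *
          ∏ l ∈ Finset.Icc 1 (m - 1), ∏ k ∈ Finset.Icc 1 (l * d), (qblock K m q k d)⁻¹) •
        ((∑ i : ZMod m, gam K m q i (d * m)) * ∑ i : ZMod m, del K m q i (d * m)) := by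
  have hP := ExtAlg.prod_swapFactor_pow_eq_one hcase hζ.pow_eq_one
  have hw : ∑ i : ZMod m, ((-1 : K) ^ (i.val * d) * wcoef K m q i.val d) •
      (gam K m q i d * del K m q i d) = ExtAlg.w q d := by
    simp only [ExtAlg.neg_one_pow_mul_wcoef]
    rfl
  rw [hw]
  refine ⟨ExtAlg.sum_gam_mem_ZGr hcase hP, ExtAlg.sum_del_mem_ZGr hcase hP, ExtAlg.w_mem_ZGr hP,
    ?_⟩
  rw [ExtAlg.w_pow hP, ExtAlg.sum_gam_mul_sum_del, smul_sum]
  refine sum_congr rfl fun i _ => ?_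
  rw [ExtAlg.prod_wCoeff_add hP, ExtAlg.prod_wCoeff_natCast_mul hcase hP]

/-- if `ζ = q_0 ⋯ q_{m-1}` is a primitive `d`-th root of unity and `m` is even
or `char K = 2`, then `x = Σ γ_i^{dm}`, `y = Σ δ_i^{dm}` and
`w = Σ (-1)^{id} ∏_{k=1}^{i}(q_k ⋯ q_{k+d-1})⁻¹ γ_i^d δ_i^d` lie in the graded centre of
`E(Λ_q)`, and `w^m = ε x y` with
`ε = (-1)^{md/2} ∏_{l=1}^{m-1} ∏_{k=1}^{ld} (q_k ⋯ q_{k+d-1})⁻¹`. -/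
theorem central_elements_m_even_or_char_two
    (K : Type) [Field K] (m : ℕ) [NeZero m] (hm : 1 ≤ m)
    (q : ZMod m → K) (hq : ∀ i, q i ≠ 0)
    (d : ℕ) (hd : 0 < d) (hζ : IsPrimitiveRoot (∏ i : ZMod m, q i) d)
    (hcase : Even m ∨ ringChar K = 2) :
    (∑ i : ZMod m, gam K m q i (d * m)) ∈ ZGr K m q ∧
    (∑ i : ZMod m, del K m q i (d * m)) ∈ ZGr K m q ∧
    (∑ i : ZMod m, ((-1 : K) ^ (i.val * d) * wcoef K m q i.val d) •
        (gam K m q i d * del K m q i d)) ∈ ZGr K m q ∧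
    (∑ i : ZMod m, ((-1 : K) ^ (i.val * d) * wcoef K m q i.val d) •
        (gam K m q i d * del K m q i d)) ^ m =
      ((-1 : K) ^ (m * d / 2) *
          ∏ l ∈ Finset.Icc 1 (m - 1), ∏ k ∈ Finset.Icc 1 (l * d), (qblock K m q k d)⁻¹) •
        ((∑ i : ZMod m, gam K m q i (d * m)) * ∑ i : ZMod m, del K m q i (d * m)) :=
  central_elements_m_even_or_char_two_general K m q d hζ hcase
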